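/- Let M be a matroid of rank three on a finite ground set E, let e, f ∈ E be distinct, and let g ∈ E∖{e,f} be such that {e, f, g} is dependent in M. Then every coefficient of ΔM{e,f}(y) − ΔM^g{e,f}(y) is nonnegative, where ΔM^g{e,f} := M_e^{fg}·M_f^{eg} − M_{ef}^g·M^{efg}. -/

import Mathlib

open MvPolynomial
open scoped Classical

/-- The basis generating polynomial `M_I^J(y)` of the minor of `M` obtained by
contracting `I` and deleting `J`:
`M_I^J(y) = Σ_{B basis of M, I ⊆ B ⊆ E∖J} Π_{e ∈ B∖I} y_e`.
(It is `0` when `I` is dependent.) -/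
noncomputable def Matroid.minorPoly {α : Type*} [Fintype α] [DecidableEq α]
    (M : Matroid α) (I J : Finset α) : MvPolynomial α ℝ :=
  ∑ B ∈ Finset.univ.filter
      (fun B : Finset α => M.IsBase (B : Set α) ∧ I ⊆ B ∧ Disjoint B J),
    ∏ e ∈ B \ I, X e

/-- The Rayleigh difference `ΔM{e,f} = M_e^f · M_f^e − M_{ef} · M^{ef}`. -/
noncomputable def Matroid.rayleighDiff {α : Type*} [Fintype α] [DecidableEq α]
    (M : Matroid α) (e f : α) : MvPolynomial α ℝ :=
  M.minorPoly {e} {f} * M.minorPoly {f} {e} - M.minorPoly {e, f} ∅ * M.minorPoly ∅ {e, f}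

/-- A matroid is Rayleigh if `ΔM{e,f}(y) ≥ 0` for all distinct ground set elements
`e, f` whenever all the variables are positive. -/
def Matroid.IsRayleigh {α : Type*} [Fintype α] [DecidableEq α] (M : Matroid α) : Prop :=
  ∀ e ∈ M.E, ∀ f ∈ M.E, e ≠ f → ∀ y : α → ℝ,
    (∀ c ∈ M.E, 0 < y c) → 0 ≤ eval y (M.rayleighDiff e f)


set_option linter.unusedSectionVars false
set_option linter.unusedVariables false
set_option maxHeartbeats 1000000

namespace RayleighAux

variable {α : Type*} [Fintype α] [DecidableEq α]

noncomputable def ind (S : Finset α) : α →₀ ℕ := ∑ c ∈ S, Finsupp.single c 1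

lemma prod_X_eq (S : Finset α) :
    (∏ c ∈ S, (X c : MvPolynomial α ℝ)) = monomial (ind S) 1 := by
  induction S using Finset.induction with
  | empty => simp [ind]
  | @insert a s h ih =>
    rw [Finset.prod_insert h, ih, X, monomial_mul, one_mul, ind, ind, Finset.sum_insert h]

noncomputable def basisSet (M : Matroid α) (I J : Finset α) : Finset (Finset α) :=
  Finset.univ.filter (fun B : Finset α => M.IsBase (B : Set α) ∧ I ⊆ B ∧ Disjoint B J)

lemma minorPoly_eq (M : Matroid α) (I J : Finset α) :
    M.minorPoly I J = ∑ B ∈ basisSet M I J, monomial (ind (B \ I)) 1 := by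
  rw [Matroid.minorPoly]
  exact Finset.sum_congr rfl fun B _ => prod_X_eq _

lemma coeff_minor_nonneg (M : Matroid α) (I J : Finset α) (μ : α →₀ ℕ) :
    0 ≤ coeff μ (M.minorPoly I J) := by
  rw [minorPoly_eq, coeff_sum]
  exact Finset.sum_nonneg fun B _ => by rw [coeff_monomial]; positivity

lemma coeff_mul_nonneg {p q : MvPolynomial α ℝ} (hp : ∀ μ, 0 ≤ coeff μ p)
    (hq : ∀ μ, 0 ≤ coeff μ q) (μ : α →₀ ℕ) : 0 ≤ coeff μ (p * q) := by
  rw [coeff_mul]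
  exact Finset.sum_nonneg fun c _ => mul_nonneg (hp _) (hq _)

lemma coeff_X_nonneg (g : α) (μ : α →₀ ℕ) : 0 ≤ coeff μ (X g : MvPolynomial α ℝ) := by
  rw [X, coeff_monomial]; positivity

lemma minorPoly_split (M : Matroid α) (I J : Finset α) (g : α) (hgI : g ∉ I) :
    M.minorPoly I J = M.minorPoly I (insert g J) + X g * M.minorPoly (insert g I) J := by
  rw [minorPoly_eq, minorPoly_eq, minorPoly_eq]
  rw [← Finset.sum_filter_add_sum_filter_not (basisSet M I J) (fun B => g ∈ B)]
  rw [add_comm]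
  congr 1
  · apply Finset.sum_congr _ fun B _ => rfl
    unfold basisSet
    rw [Finset.filter_filter]
    apply Finset.filter_congr
    intro B _
    simp only [Finset.disjoint_insert_right]
    tauto
  · rw [Finset.mul_sum]
    rw [show (basisSet M I J).filter (fun B => g ∈ B) = basisSet M (insert g I) J by
      unfold basisSet
      rw [Finset.filter_filter]
      apply Finset.filter_congr
      intro B _
      simp only [Finset.insert_subset_iff]
      tauto]
    apply Finset.sum_congr rfl
    intro B hB
    simp only [basisSet, Finset.mem_filter, Finset.insert_subset_iff] at hB
    have hgB : g ∈ B \ I := Finset.mem_sdiff.2 ⟨hB.2.2.1.1, hgI⟩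
    have h1 : B \ insert g I = (B \ I).erase g := by
      ext z; simp [Finset.mem_sdiff, Finset.mem_erase]; tauto
    rw [h1, X, monomial_mul, one_mul]
    congr 1
    have : ind (B \ I) = Finsupp.single g 1 + ind ((B \ I).erase g) := by
      rw [ind, ind, ← Finset.add_sum_erase _ _ hgB]
    rw [this]

lemma minorPoly_three_zero {M : Matroid α} {e f g : α} (hdep : M.Dep {e, f, g}) :
    M.minorPoly (insert g {e, f}) ∅ = 0 := by
  rw [minorPoly_eq]
  convert Finset.sum_empty
  rw [Finset.eq_empty_iff_forall_notMem]
  intro B hB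
  simp only [basisSet, Finset.mem_filter, Finset.insert_subset_iff] at hB
  apply hdep.not_indep
  apply hB.2.1.indep.subset
  intro z hz
  simp only [Set.mem_insert_iff, Set.mem_singleton_iff] at hz
  have h := hB.2.2.1
  rcases hz with rfl | rfl | rfl
  · exact Finset.mem_coe.mpr h.2.1
  · exact Finset.mem_coe.mpr (h.2.2 (by simp))
  · exact Finset.mem_coe.mpr h.1

lemma identity {M : Matroid α} {e f g : α} (hef : e ≠ f) (heg : e ≠ g) (hfg : f ≠ g)
    (hdep : M.Dep {e, f, g}) :
    M.rayleighDiff e f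
      - (M.minorPoly {e} {f, g} * M.minorPoly {f} {e, g}
          - M.minorPoly {e, f} {g} * M.minorPoly ∅ {e, f, g})
    = X g * ((M.minorPoly {e} {f, g} * M.minorPoly {f, g} {e}
        + M.minorPoly {e, g} {f} * M.minorPoly {f} {e, g}
        - M.minorPoly {e, f} {g} * M.minorPoly {g} {e, f})
        + X g * (M.minorPoly {e, g} {f} * M.minorPoly {f, g} {e})) := by
  have hgf : (insert g ({f} : Finset α)) = {f, g} := Finset.pair_comm g f
  have hge : (insert g ({e} : Finset α)) = {e, g} := Finset.pair_comm g e
  have hgef : (insert g ({e, f} : Finset α)) = {e, f, g} := by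
    ext z; simp; tauto
  have hg0 : (insert g (∅ : Finset α)) = {g} := rfl
  have h1 := minorPoly_split M {e} {f} g (by simp [heg.symm])
  have h2 := minorPoly_split M {f} {e} g (by simp [hfg.symm])
  have h3 := minorPoly_split M ∅ {e, f} g (by simp)
  have h4 := minorPoly_split M {e, f} ∅ g (by simp [heg.symm, hfg.symm])
  rw [hgf, hge] at h1
  rw [hge, hgf] at h2
  rw [hgef, hg0] at h3
  rw [hgef, hg0] at h4
  have hz : M.minorPoly ({e, f, g} : Finset α) ∅ = 0 := by
    rw [← hgef]; exact minorPoly_three_zero hdep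
  rw [hz, mul_zero, add_zero] at h4
  rw [Matroid.rayleighDiff, h1, h2, h3, h4]
  ring

lemma coeff_minor_mul (M : Matroid α) (I J I' J' : Finset α) (μ : α →₀ ℕ) :
    coeff μ (M.minorPoly I J * M.minorPoly I' J') =
      (((basisSet M I J) ×ˢ (basisSet M I' J')).filter
        (fun p => ind (p.1 \ I) + ind (p.2 \ I') = μ)).card := by
  rw [minorPoly_eq, minorPoly_eq, Finset.sum_mul_sum]
  simp_rw [monomial_mul, one_mul]
  rw [← Finset.sum_product', coeff_sum]
  simp_rw [coeff_monomial]
  rw [Finset.sum_boole]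


lemma insert_sdiff_single {S : Finset α} {u : α} (hu : u ∉ S) :
    (insert u S) \ {u} = S := by
  rw [Finset.sdiff_singleton_eq_erase, Finset.erase_insert hu]

lemma insert_insert_sdiff {S : Finset α} {u v : α} (hu : u ∉ S) (hv : v ∉ S) :
    (insert u (insert v S)) \ {u, v} = S := by
  ext z
  simp only [Finset.mem_sdiff, Finset.mem_insert, Finset.mem_singleton]
  constructor
  · rintro ⟨rfl | rfl | hz, h2⟩ <;> tauto
  · intro hz
    exact ⟨Or.inr (Or.inr hz), fun h => by rcases h with rfl | rfl; exacts [hu hz, hv hz]⟩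

lemma recover_of_sdiff {B B' s : Finset α} (hs : s ⊆ B) (hs' : s ⊆ B')
    (h : B \ s = B' \ s) : B = B' := by
  rw [← Finset.sdiff_union_of_subset hs, ← Finset.sdiff_union_of_subset hs', h]


lemma base_of_indep_ncard_three {M : Matroid α} (hr : ∀ B : Set α, M.IsBase B → B.ncard = 3)
    {I : Set α} (hI : M.Indep I) (hcard : I.ncard = 3) : M.IsBase I := by
  obtain ⟨B, hB, hIB⟩ := hI.exists_isBase_superset
  have : I = B := Set.eq_of_subset_of_ncard_le hIB (by rw [hr B hB, hcard]) B.toFinite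
  rwa [this]


lemma key {M : Matroid α} (hr : ∀ B : Set α, M.IsBase B → B.ncard = 3)
    {e f g x a b : α} (hef : e ≠ f) (heg : e ≠ g) (hfg : f ≠ g)
    (hdep : M.Dep {e, f, g})
    (hB1 : M.IsBase {e, f, x}) (hB2 : M.IsBase {g, a, b})
    (hxe : x ≠ e) (hxf : x ≠ f) (hxg : x ≠ g)
    (hae : a ≠ e) (haf : a ≠ f) (hag : a ≠ g)
    (hbe : b ≠ e) (hbf : b ≠ f) (hbg : b ≠ g) (hab : a ≠ b) :
    (M.IsBase {e, a, b} ∧ M.IsBase {f, g, x}) ∨ (M.IsBase {e, g, x} ∧ M.IsBase {f, a, b}) := by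
  have heE : e ∈ M.E := hB1.subset_ground (by simp)
  have hfE : f ∈ M.E := hB1.subset_ground (by simp)
  have hxE : x ∈ M.E := hB1.subset_ground (by simp)
  have hgE : g ∈ M.E := hB2.subset_ground (by simp)
  have haE : a ∈ M.E := hB2.subset_ground (by simp)
  have hbE : b ∈ M.E := hB2.subset_ground (by simp)
  have hEef : M.Indep {e, f} := hB1.indep.subset (by intro z hz; simp at hz ⊢; tauto)
  have hIe : M.Indep {e} := hEef.subset (by simp)
  have hIf : M.Indep {f} := hEef.subset (by simp)
  have hIg : M.Indep {g} := hB2.indep.subset (by simp)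
  have hab_ind : M.Indep {a, b} := hB2.indep.subset (by intro z hz; simp at hz ⊢; tauto)
  -- x ∉ cl {e,f}
  have hxcl : x ∉ M.closure {e, f} := by
    refine (hEef.notMem_closure_iff_of_notMem (by simp [hxe, hxf]) hxE).mpr ?_
    have : ({e, f, x} : Set α) = insert x {e, f} := by ext z; simp; tauto
    rw [← this]; exact hB1.indep
  -- g ∈ cl {e,f}
  have hgcl : g ∈ M.closure {e, f} := by
    have hd : M.Dep (insert g {e, f}) := by
      rwa [show insert g ({e, f} : Set α) = {e, f, g} by ext z; simp; tauto]
    exact (hEef.insert_dep_iff.mp hd).1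
  -- g ∉ cl {a,b}
  have hgab : g ∉ M.closure {a, b} := by
    refine (hab_ind.notMem_closure_iff_of_notMem (by simp [hag.symm, hbg.symm]) hgE).mpr ?_
    exact hB2.indep
  -- e, f not loops
  have he0 : e ∉ M.closure ∅ := by
    refine (M.empty_indep.notMem_closure_iff_of_notMem (by simp) heE).mpr ?_
    simpa using hIe
  have hf0 : f ∉ M.closure ∅ := by
    refine (M.empty_indep.notMem_closure_iff_of_notMem (by simp) hfE).mpr ?_
    simpa using hIf
  have hclef_sub : ∀ z ∈ M.closure {e, f}, ∀ w ∈ M.closure {e, f},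
      M.closure {z, w} ⊆ M.closure {e, f} := fun z hz w hw =>
    M.closure_subset_closure_of_subset_closure (by
      intro u hu; simp at hu; rcases hu with h | h <;> subst h <;> assumption)
  have hecl : e ∈ M.closure {e, f} := M.mem_closure_of_mem (by simp)
  have hfcl : f ∈ M.closure {e, f} := M.mem_closure_of_mem (by simp)
  by_cases hA1 : e ∈ M.closure {a, b}
  · -- type B
    have hfab : f ∉ M.closure {a, b} := by
      intro hfab
      apply hgab
      exact M.closure_subset_closure_of_subset_closure
        (by intro u hu; simp at hu; rcases hu with h | h <;> subst h <;> assumption) hgcl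
    have hBfab : M.IsBase {f, a, b} := by
      apply base_of_indep_ncard_three hr
      · exact (hab_ind.insert_indep_iff_of_notMem (by simp [haf.symm, hbf.symm])).mpr ⟨hfE, hfab⟩
      · exact Set.ncard_eq_three.mpr ⟨f, a, b, haf.symm, hbf.symm, hab, rfl⟩
    have heg_ind : M.Indep {e, g} := by
      rw [show ({e, g} : Set α) = insert g {e} by ext z; simp; tauto]
      by_contra hdep'
      have hd : M.Dep (insert g {e}) :=
        ⟨hdep', by intro z hz; simp at hz; rcases hz with h | h <;> subst h <;> assumption⟩
      have hgcle := (hIe.insert_dep_iff.mp hd).1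
      exact hgab (M.closure_subset_closure_of_subset_closure
        (by simpa using hA1) hgcle)
    have hBegx : M.IsBase {e, g, x} := by
      apply base_of_indep_ncard_three hr
      · have hxcleg : x ∉ M.closure {e, g} := fun hx => hxcl (hclef_sub e hecl g hgcl hx)
        have := (heg_ind.insert_indep_iff_of_notMem (by simp [hxe, hxg])).mpr ⟨hxE, hxcleg⟩
        rwa [show insert x ({e, g} : Set α) = {e, g, x} by ext z; simp; tauto] at this
      · exact Set.ncard_eq_three.mpr ⟨e, g, x, heg, hxe.symm, hxg.symm, rfl⟩
    exact Or.inr ⟨hBegx, hBfab⟩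
  · have hBeab : M.IsBase {e, a, b} := by
      apply base_of_indep_ncard_three hr
      · exact (hab_ind.insert_indep_iff_of_notMem (by simp [hae.symm, hbe.symm])).mpr ⟨heE, hA1⟩
      · exact Set.ncard_eq_three.mpr ⟨e, a, b, hae.symm, hbe.symm, hab, rfl⟩
    by_cases hA2 : M.Indep {f, g}
    · -- type A
      have hBfgx : M.IsBase {f, g, x} := by
        apply base_of_indep_ncard_three hr
        · have hxclfg : x ∉ M.closure {f, g} := fun hx => hxcl (hclef_sub f hfcl g hgcl hx)
          have := (hA2.insert_indep_iff_of_notMem (by simp [hxf, hxg])).mpr ⟨hxE, hxclfg⟩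
          rwa [show insert x ({f, g} : Set α) = {f, g, x} by ext z; simp; tauto] at this
        · exact Set.ncard_eq_three.mpr ⟨f, g, x, hfg, hxf.symm, hxg.symm, rfl⟩
      exact Or.inl ⟨hBeab, hBfgx⟩
    · -- {f,g} dependent : type B
      have hDfg : M.Dep (insert f {g}) := by
        refine ⟨?_, by intro z hz; simp at hz; rcases hz with h | h <;> subst h <;> assumption⟩
        rwa [show insert f ({g} : Set α) = {f, g} from rfl]
      have hf_cl_g : f ∈ M.closure {g} := (hIg.insert_dep_iff.mp hDfg).1
      have hg_cl_f : g ∈ M.closure {f} := by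
        have h1 : f ∈ M.closure (insert g ∅) \ M.closure ∅ := by
          constructor
          · simpa using hf_cl_g
          · exact hf0
        simpa using (Matroid.closure_exchange h1).1
      have heg_ind : M.Indep {e, g} := by
        rw [show ({e, g} : Set α) = insert e {g} by rfl]
        by_contra hdep'
        have hd : M.Dep (insert e {g}) :=
          ⟨hdep', by intro z hz; simp at hz; rcases hz with h | h <;> subst h <;> assumption⟩
        have he_cl_g := (hIg.insert_dep_iff.mp hd).1
        have hg_cl_e : g ∈ M.closure {e} := by
          have h1 : e ∈ M.closure (insert g ∅) \ M.closure ∅ := by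
            constructor
            · simpa using he_cl_g
            · exact he0
          simpa using (Matroid.closure_exchange h1).1
        have hf_cl_e : f ∈ M.closure {e} :=
          M.closure_subset_closure_of_subset_closure (by simpa using hg_cl_e) hf_cl_g
        have : M.Dep (insert f {e}) := hIe.insert_dep_iff.mpr ⟨hf_cl_e, by simp [hef.symm]⟩
        apply this.not_indep
        have : ({e, f} : Set α) = insert f {e} := by ext z; simp; tauto
        rwa [this] at hEef
      have hBegx : M.IsBase {e, g, x} := by
        apply base_of_indep_ncard_three hr
        · have hxcleg : x ∉ M.closure {e, g} := fun hx => hxcl (hclef_sub e hecl g hgcl hx)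
          have := (heg_ind.insert_indep_iff_of_notMem (by simp [hxe, hxg])).mpr ⟨hxE, hxcleg⟩
          rwa [show insert x ({e, g} : Set α) = {e, g, x} by ext z; simp; tauto] at this
        · exact Set.ncard_eq_three.mpr ⟨e, g, x, heg, hxe.symm, hxg.symm, rfl⟩
      have hfab : f ∉ M.closure {a, b} := by
        intro hfab
        exact hgab (M.closure_subset_closure_of_subset_closure (by simpa using hfab) hg_cl_f)
      have hBfab : M.IsBase {f, a, b} := by
        apply base_of_indep_ncard_three hr
        · exact (hab_ind.insert_indep_iff_of_notMem (by simp [haf.symm, hbf.symm])).mpr ⟨hfE, hfab⟩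
        · exact Set.ncard_eq_three.mpr ⟨f, a, b, haf.symm, hbf.symm, hab, rfl⟩
      exact Or.inr ⟨hBegx, hBfab⟩

/-- The main counting inequality. -/
lemma card_ineq {M : Matroid α} (hr : ∀ B : Set α, M.IsBase B → B.ncard = 3)
    {e f g : α} (hef : e ≠ f) (heg : e ≠ g) (hfg : f ≠ g)
    (hdep : M.Dep {e, f, g}) (μ : α →₀ ℕ) :
    coeff μ (M.minorPoly {e, f} {g} * M.minorPoly {g} {e, f})
      ≤ coeff μ (M.minorPoly {e} {f, g} * M.minorPoly {f, g} {e})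
        + coeff μ (M.minorPoly {e, g} {f} * M.minorPoly {f} {e, g}) := by
  rw [coeff_minor_mul, coeff_minor_mul, coeff_minor_mul]
  have hnat :
      (((basisSet M {e, f} {g}) ×ˢ (basisSet M {g} {e, f})).filter
        (fun p => ind (p.1 \ {e, f}) + ind (p.2 \ {g}) = μ)).card
      ≤ (((basisSet M {e} {f, g}) ×ˢ (basisSet M {f, g} {e})).filter
          (fun p => ind (p.1 \ {e}) + ind (p.2 \ {f, g}) = μ)).card
        + (((basisSet M {e, g} {f}) ×ˢ (basisSet M {f} {e, g})).filter
          (fun p => ind (p.1 \ {e, g}) + ind (p.2 \ {f}) = μ)).card := by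
    set SN := ((basisSet M {e, f} {g}) ×ˢ (basisSet M {g} {e, f})).filter
        (fun p => ind (p.1 \ {e, f}) + ind (p.2 \ {g}) = μ) with hSN
    -- facts about members of SN
    have hmem : ∀ p : Finset α × Finset α, p ∈ SN →
        M.IsBase ↑p.1 ∧ e ∈ p.1 ∧ f ∈ p.1 ∧ g ∉ p.1 ∧
        M.IsBase ↑p.2 ∧ g ∈ p.2 ∧ e ∉ p.2 ∧ f ∉ p.2 ∧
        ind (p.1 \ {e, f}) + ind (p.2 \ {g}) = μ := by
      intro p hp
      simp only [hSN, basisSet, Finset.mem_filter, Finset.mem_product, Finset.mem_univ,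
        true_and, Finset.insert_subset_iff, Finset.singleton_subset_iff,
        Finset.disjoint_singleton_right, Finset.disjoint_insert_right] at hp
      tauto
    -- the dichotomy from the key lemma
    have main : ∀ p ∈ SN,
        (M.IsBase ↑(insert e (p.2.erase g)) ∧
          M.IsBase ↑(insert f (insert g (p.1 \ ({e, f} : Finset α))))) ∨
        (M.IsBase ↑(insert g (insert e (p.1 \ ({e, f} : Finset α)))) ∧
          M.IsBase ↑(insert f (p.2.erase g))) := by
      intro p hp
      obtain ⟨hb1, he1, hf1, hg1, hb2, hg2, he2, hf2, -⟩ := hmem p hp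
      -- extract x
      have hcard1 : p.1.card = 3 := by
        have := hr ↑p.1 hb1; rwa [Set.ncard_coe_finset] at this
      have hcard2 : p.2.card = 3 := by
        have := hr ↑p.2 hb2; rwa [Set.ncard_coe_finset] at this
      have hsd1 : (p.1 \ ({e, f} : Finset α)).card = 1 := by
        rw [Finset.card_sdiff_of_subset (by simp [Finset.insert_subset_iff, he1, hf1])]
        rw [hcard1, Finset.card_insert_of_notMem (by simp [hef]), Finset.card_singleton]
      obtain ⟨x, hx⟩ := Finset.card_eq_one.mp hsd1
      have hxmem : x ∈ p.1 \ ({e, f} : Finset α) := by rw [hx]; simp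
      rw [Finset.mem_sdiff, Finset.mem_insert, Finset.mem_singleton] at hxmem
      have hx1 : x ∈ p.1 := hxmem.1
      have hxe : x ≠ e := fun h => hxmem.2 (Or.inl h)
      have hxf : x ≠ f := fun h => hxmem.2 (Or.inr h)
      have hxg : x ≠ g := fun h => hg1 (h ▸ hx1)
      have hsd2 : (p.2.erase g).card = 2 := by
        rw [Finset.card_erase_of_mem hg2, hcard2]
      obtain ⟨a, b, hab, hB2e⟩ := Finset.card_eq_two.mp hsd2
      have hamem : a ∈ p.2.erase g := by rw [hB2e]; simp
      have hbmem : b ∈ p.2.erase g := by rw [hB2e]; simp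
      rw [Finset.mem_erase] at hamem hbmem
      have hae : a ≠ e := fun h => he2 (h ▸ hamem.2)
      have haf : a ≠ f := fun h => hf2 (h ▸ hamem.2)
      have hbe : b ≠ e := fun h => he2 (h ▸ hbmem.2)
      have hbf : b ≠ f := fun h => hf2 (h ▸ hbmem.2)
      -- p.1 and p.2 as explicit sets
      have hp1eq : p.1 = insert e (insert f ({x} : Finset α)) := by
        ext z
        simp only [Finset.mem_insert, Finset.mem_singleton]
        constructor
        · intro hz
          by_cases hze : z = e; · exact Or.inl hze
          by_cases hzf : z = f; · exact Or.inr (Or.inl hzf)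
          have : z ∈ p.1 \ ({e, f} : Finset α) := by
            rw [Finset.mem_sdiff]; simp [hz, hze, hzf]
          rw [hx] at this; simp at this; tauto
        · rintro (rfl | rfl | rfl) <;> [exact he1; exact hf1; exact hx1]
      have hp2eq : p.2 = insert g ({a, b} : Finset α) := by
        ext z
        simp only [Finset.mem_insert, Finset.mem_singleton]
        constructor
        · intro hz
          by_cases hzg : z = g; · exact Or.inl hzg
          have : z ∈ p.2.erase g := Finset.mem_erase.mpr ⟨hzg, hz⟩
          rw [hB2e] at this; simp at this; tauto
        · rintro (rfl | rfl | rfl)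
          · exact hg2
          · exact hamem.2
          · exact hbmem.2
      have hcoe1 : (↑p.1 : Set α) = {e, f, x} := by rw [hp1eq]; simp
      have hcoe2 : (↑p.2 : Set α) = {g, a, b} := by rw [hp2eq]; simp
      have hkey := key hr hef heg hfg hdep (hcoe1 ▸ hb1) (hcoe2 ▸ hb2)
        hxe hxf hxg hae haf hamem.1 hbe hbf hbmem.1 hab
      -- coercion computations
      have hc1 : (↑(insert e (p.2.erase g)) : Set α) = {e, a, b} := by
        rw [hB2e]; simp
      have hc2 : (↑(insert f (insert g (p.1 \ ({e, f} : Finset α)))) : Set α) = {f, g, x} := by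
        rw [hx]; simp
      have hc3 : (↑(insert g (insert e (p.1 \ ({e, f} : Finset α)))) : Set α) = {e, g, x} := by
        rw [hx]; simp only [Finset.coe_insert, Finset.coe_singleton]
        rw [Set.insert_comm]
      have hc4 : (↑(insert f (p.2.erase g)) : Set α) = {f, a, b} := by
        rw [hB2e]; simp
      rw [hc1, hc2, hc3, hc4]
      exact hkey
    -- split SN by the first alternative
    classical
    rw [← Finset.card_filter_add_card_filter_not
      (p := fun p : Finset α × Finset α =>
        M.IsBase ↑(insert e (p.2.erase g)) ∧
          M.IsBase ↑(insert f (insert g (p.1 \ ({e, f} : Finset α))))) (s := SN)]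
    refine Nat.add_le_add ?_ ?_
    · -- injection into the A part
      apply Finset.card_le_card_of_injOn
        (fun p => (insert e (p.2.erase g), insert f (insert g (p.1 \ ({e, f} : Finset α)))))
      · intro p hp
        rw [Finset.mem_coe, Finset.mem_filter] at hp
        obtain ⟨hpSN, hcond⟩ := hp
        obtain ⟨hb1, he1, hf1, hg1, hb2, hg2, he2, hf2, hμ⟩ := hmem p hpSN
        have hgne : g ∉ p.1 \ ({e, f} : Finset α) := fun h => hg1 (Finset.mem_sdiff.mp h).1
        have hfne : f ∉ insert g (p.1 \ ({e, f} : Finset α)) := by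
          simp only [Finset.mem_insert]
          rintro (rfl | h)
          · exact hfg rfl
          · exact (Finset.mem_sdiff.mp h).2 (by simp)
        have hene : e ∉ p.2.erase g := fun h => he2 (Finset.mem_erase.mp h).2
        simp only [Finset.mem_coe, Finset.mem_filter, Finset.mem_product, basisSet, Finset.mem_univ, true_and]
        refine ⟨⟨⟨hcond.1, by simp, ?_⟩, ⟨hcond.2, ?_, ?_⟩⟩, ?_⟩
        · -- Disjoint (insert e (p.2.erase g)) {f, g}
          rw [Finset.disjoint_left]
          intro z hz
          simp only [Finset.mem_insert, Finset.mem_singleton]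
          rcases Finset.mem_insert.mp hz with rfl | hz'
          · rintro (rfl | rfl); exacts [hef rfl, heg rfl]
          · rw [Finset.mem_erase] at hz'
            rintro (rfl | rfl); exacts [hf2 hz'.2, hz'.1 rfl]
        · -- {f, g} ⊆ insert f (insert g _)
          simp [Finset.insert_subset_iff]
        · -- Disjoint _ {e}
          rw [Finset.disjoint_left]
          intro z hz
          simp only [Finset.mem_singleton]
          rcases Finset.mem_insert.mp hz with rfl | hz'
          · rintro rfl; exact hef rfl
          rcases Finset.mem_insert.mp hz' with rfl | hz''
          · rintro rfl; exact heg rfl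
          · rintro rfl; exact (Finset.mem_sdiff.mp hz'').2 (by simp)
        · -- the exponent condition
          rw [insert_sdiff_single hene, Finset.erase_eq,
            show (insert f (insert g (p.1 \ ({e, f} : Finset α)))) \ ({f, g} : Finset α)
              = p.1 \ ({e, f} : Finset α) from insert_insert_sdiff
                (fun h => (Finset.mem_sdiff.mp h).2 (by simp)) hgne]
          rw [add_comm]
          exact hμ
      · -- injectivity
        intro p hp p' hp' heq
        simp only [Finset.coe_filter, Set.mem_setOf_eq] at hp hp'
        obtain ⟨hb1, he1, hf1, hg1, hb2, hg2, he2, hf2, -⟩ := hmem p hp.1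
        obtain ⟨hb1', he1', hf1', hg1', hb2', hg2', he2', hf2', -⟩ := hmem p' hp'.1
        have heq1 := congrArg Prod.fst heq
        have heq2 := congrArg Prod.snd heq
        simp only at heq1 heq2
        have hene : e ∉ p.2.erase g := fun h => he2 (Finset.mem_erase.mp h).2
        have hene' : e ∉ p'.2.erase g := fun h => he2' (Finset.mem_erase.mp h).2
        have h2 : p.2 = p'.2 := by
          have : p.2 \ {g} = p'.2 \ {g} := by
            rw [← Finset.erase_eq, ← Finset.erase_eq,
              ← insert_sdiff_single hene, ← insert_sdiff_single hene', heq1]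
          exact recover_of_sdiff (by simp [hg2]) (by simp [hg2']) this
        have h1 : p.1 = p'.1 := by
          have hgne : g ∉ p.1 \ ({e, f} : Finset α) := fun h => hg1 (Finset.mem_sdiff.mp h).1
          have hgne' : g ∉ p'.1 \ ({e, f} : Finset α) := fun h => hg1' (Finset.mem_sdiff.mp h).1
          have hfne : f ∉ p.1 \ ({e, f} : Finset α) := fun h => (Finset.mem_sdiff.mp h).2 (by simp)
          have hfne' : f ∉ p'.1 \ ({e, f} : Finset α) :=
            fun h => (Finset.mem_sdiff.mp h).2 (by simp)
          have : p.1 \ ({e, f} : Finset α) = p'.1 \ ({e, f} : Finset α) := by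
            rw [← insert_insert_sdiff hfne hgne, ← insert_insert_sdiff hfne' hgne', heq2]
          exact recover_of_sdiff (by simp [Finset.insert_subset_iff, he1, hf1])
            (by simp [Finset.insert_subset_iff, he1', hf1']) this
        exact Prod.ext h1 h2
    · -- injection into the B part
      apply Finset.card_le_card_of_injOn
        (fun p => (insert g (insert e (p.1 \ ({e, f} : Finset α))), insert f (p.2.erase g)))
      · intro p hp
        rw [Finset.mem_coe, Finset.mem_filter] at hp
        obtain ⟨hpSN, hcond⟩ := hp
        obtain ⟨hb1, he1, hf1, hg1, hb2, hg2, he2, hf2, hμ⟩ := hmem p hpSN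
        have hbases := (main p hpSN).resolve_left hcond
        have hgne : g ∉ p.1 \ ({e, f} : Finset α) := fun h => hg1 (Finset.mem_sdiff.mp h).1
        have hene : e ∉ p.1 \ ({e, f} : Finset α) := fun h => (Finset.mem_sdiff.mp h).2 (by simp)
        have hfne : f ∉ p.2.erase g := fun h => hf2 (Finset.mem_erase.mp h).2
        simp only [Finset.mem_coe, Finset.mem_filter, Finset.mem_product, basisSet, Finset.mem_univ, true_and]
        refine ⟨⟨⟨hbases.1, ?_, ?_⟩, ⟨hbases.2, by simp, ?_⟩⟩, ?_⟩
        · -- {e, g} ⊆ insert g (insert e _)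
          simp [Finset.insert_subset_iff]
        · -- Disjoint _ {f}
          rw [Finset.disjoint_left]
          intro z hz
          simp only [Finset.mem_singleton]
          rcases Finset.mem_insert.mp hz with rfl | hz'
          · rintro rfl; exact hfg rfl
          rcases Finset.mem_insert.mp hz' with rfl | hz''
          · rintro rfl; exact hef rfl
          · rintro rfl; exact (Finset.mem_sdiff.mp hz'').2 (by simp)
        · -- Disjoint (insert f (p.2.erase g)) {e, g}
          rw [Finset.disjoint_left]
          intro z hz
          simp only [Finset.mem_insert, Finset.mem_singleton]
          rcases Finset.mem_insert.mp hz with rfl | hz'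
          · rintro (rfl | rfl); exacts [hef rfl, hfg rfl]
          · rw [Finset.mem_erase] at hz'
            rintro (rfl | rfl); exacts [he2 hz'.2, hz'.1 rfl]
        · -- the exponent condition
          rw [show (insert g (insert e (p.1 \ ({e, f} : Finset α)))) \ ({e, g} : Finset α)
              = p.1 \ ({e, f} : Finset α) by
            rw [show ({e, g} : Finset α) = {g, e} from Finset.pair_comm e g]
            exact insert_insert_sdiff hgne hene]
          rw [insert_sdiff_single hfne, Finset.erase_eq]
          exact hμ
      · -- injectivity
        intro p hp p' hp' heq
        simp only [Finset.coe_filter, Set.mem_setOf_eq] at hp hp'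
        obtain ⟨hb1, he1, hf1, hg1, hb2, hg2, he2, hf2, -⟩ := hmem p hp.1
        obtain ⟨hb1', he1', hf1', hg1', hb2', hg2', he2', hf2', -⟩ := hmem p' hp'.1
        have heq1 := congrArg Prod.fst heq
        have heq2 := congrArg Prod.snd heq
        simp only at heq1 heq2
        have hfne : f ∉ p.2.erase g := fun h => hf2 (Finset.mem_erase.mp h).2
        have hfne' : f ∉ p'.2.erase g := fun h => hf2' (Finset.mem_erase.mp h).2
        have h2 : p.2 = p'.2 := by
          have : p.2 \ {g} = p'.2 \ {g} := by
            rw [← Finset.erase_eq, ← Finset.erase_eq,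
              ← insert_sdiff_single hfne, ← insert_sdiff_single hfne', heq2]
          exact recover_of_sdiff (by simp [hg2]) (by simp [hg2']) this
        have h1 : p.1 = p'.1 := by
          have hgne : g ∉ p.1 \ ({e, f} : Finset α) := fun h => hg1 (Finset.mem_sdiff.mp h).1
          have hgne' : g ∉ p'.1 \ ({e, f} : Finset α) := fun h => hg1' (Finset.mem_sdiff.mp h).1
          have hene : e ∉ p.1 \ ({e, f} : Finset α) := fun h => (Finset.mem_sdiff.mp h).2 (by simp)
          have hene' : e ∉ p'.1 \ ({e, f} : Finset α) :=
            fun h => (Finset.mem_sdiff.mp h).2 (by simp)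
          have : p.1 \ ({e, f} : Finset α) = p'.1 \ ({e, f} : Finset α) := by
            have h := congrArg (fun t => t \ ({g, e} : Finset α)) heq1
            simpa only [insert_insert_sdiff hgne hene, insert_insert_sdiff hgne' hene'] using h
          exact recover_of_sdiff (by simp [Finset.insert_subset_iff, he1, hf1])
            (by simp [Finset.insert_subset_iff, he1', hf1']) this
        exact Prod.ext h1 h2
  exact_mod_cast hnat

end RayleighAux

/-- Let `M` be a matroid of rank three, `e, f` distinct, and `g ∉ {e, f}` with
`{e, f, g}` dependent in `M`. Then every coefficient of
`ΔM{e,f} − ΔM^g{e,f}` is nonnegative, where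
`ΔM^g{e,f} = M_e^{fg}·M_f^{eg} − M_{ef}^g·M^{efg}`. -/
theorem rank_three_rayleighDiff_sub_deletion_coeff_nonneg
    {α : Type*} [Fintype α] [DecidableEq α]
    (M : Matroid α) (hr : ∀ B : Set α, M.IsBase B → B.ncard = 3)
    (e f g : α) (hef : e ≠ f) (heg : e ≠ g) (hfg : f ≠ g)
    (hdep : M.Dep {e, f, g}) :
    ∀ μ : α →₀ ℕ,
      0 ≤ (M.rayleighDiff e f
        - (M.minorPoly {e} {f, g} * M.minorPoly {f} {e, g}
            - M.minorPoly {e, f} {g} * M.minorPoly ∅ {e, f, g})).coeff μ := by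
  intro μ
  rw [RayleighAux.identity hef heg hfg hdep]
  refine RayleighAux.coeff_mul_nonneg (RayleighAux.coeff_X_nonneg g) (fun ν => ?_) μ
  rw [coeff_add, coeff_sub, coeff_add]
  have h := RayleighAux.card_ineq hr hef heg hfg hdep ν
  have h2 := RayleighAux.coeff_mul_nonneg (RayleighAux.coeff_X_nonneg g)
    (RayleighAux.coeff_mul_nonneg (RayleighAux.coeff_minor_nonneg M {e, g} {f})
      (RayleighAux.coeff_minor_nonneg M {f, g} {e})) ν
  linarith
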